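/- Let g(τ) = τ/√(τ² + r) for fixed r > 0, let s ∈ ℝ with s < 0, let Δ > 0 with s - Δ < 0 < s + Δ, and let 0 < α < 1. Then the integral ∫_{s-Δ}^{s+Δ} g(τ) |s - τ|^{-α} dτ is strictly negative. (Symmetrically, if s > 0 the integral is strictly positive.) -/

import Mathlib

/-!
Reflecting `[s - Δ, s + Δ]` in its midpoint `s` fixes the weight `|s - τ| ^ (-α)`, so twice the
integral is `∫ (g τ + g (2 s - τ)) |s - τ| ^ (-α) dτ`. Since `g` is odd and strictly increasing,
`g τ + g (2 s - τ) = g τ - g (τ - 2 s)` has the sign of `s` for every `τ`, while the weight is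
positive off the single point `τ = s`. The case `s > 0` reduces to `s < 0` under `τ ↦ -τ`.
-/

open MeasureTheory intervalIntegral Set

section ReflectedWeight

variable {g w : ℝ → ℝ} {s Δ : ℝ}

lemma integral_mul_eq_integral_comp_reflect_mul (hw : ∀ τ, w (2 * s - τ) = w τ) :
    ∫ τ in (s - Δ)..(s + Δ), g τ * w τ = ∫ τ in (s - Δ)..(s + Δ), g (2 * s - τ) * w τ := by
  have h := integral_comp_sub_left (a := s - Δ) (b := s + Δ) (fun τ => g τ * w τ) (2 * s)
  rw [show 2 * s - (s + Δ) = s - Δ by ring, show 2 * s - (s - Δ) = s + Δ by ring] at h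
  simp only [hw] at h
  exact h.symm

lemma IntervalIntegrable.comp_reflect_mul (hw : ∀ τ, w (2 * s - τ) = w τ)
    (hint : IntervalIntegrable (fun τ => g τ * w τ) volume (s - Δ) (s + Δ)) :
    IntervalIntegrable (fun τ => g (2 * s - τ) * w τ) volume (s - Δ) (s + Δ) := by
  have h := (hint.comp_sub_left (2 * s)).symm
  rw [show 2 * s - (s + Δ) = s - Δ by ring, show 2 * s - (s - Δ) = s + Δ by ring] at h
  simpa only [hw] using h

lemma integral_mul_neg_of_odd_of_strictMono (hg : StrictMono g) (hodd : Function.Odd g)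
    (hw : ∀ τ, w (2 * s - τ) = w τ) (hw_pos : ∀ τ ≠ s, 0 < w τ)
    (hint : IntervalIntegrable (fun τ => g τ * w τ) volume (s - Δ) (s + Δ))
    (hs : s < 0) (hΔ : 0 < Δ) :
    ∫ τ in (s - Δ)..(s + Δ), g τ * w τ < 0 := by
  have hsum_neg (τ : ℝ) : g τ + g (2 * s - τ) < 0 := by
    have : g τ < g (τ - 2 * s) := hg (by linarith)
    rw [show 2 * s - τ = -(τ - 2 * s) by ring, hodd]
    linarith
  set F := fun τ => (g τ + g (2 * s - τ)) * w τ
  have hF_neg {a b : ℝ} (hab : a < b) (hs_notMem : s ∉ Ioo a b)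
      (hF : IntervalIntegrable F volume a b) : ∫ τ in a..b, F τ < 0 := by
    have hpos : 0 < ∫ τ in a..b, -F τ := by
      refine intervalIntegral_pos_of_pos_on hF.neg (fun τ hτ => ?_) hab
      have hτs : τ ≠ s := by rintro rfl; exact hs_notMem hτ
      exact neg_pos.2 (mul_neg_of_neg_of_pos (hsum_neg τ) (hw_pos τ hτs))
    rw [intervalIntegral.integral_neg] at hpos
    linarith
  have hint_reflect := hint.comp_reflect_mul hw
  have hF_int : IntervalIntegrable F volume (s - Δ) (s + Δ) := by
    simpa only [F, add_mul] using hint.add hint_reflect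
  have hs_mem : s ∈ uIcc (s - Δ) (s + Δ) := mem_uIcc_of_le (by linarith) (by linarith)
  have hF_left := hF_int.mono_set (uIcc_subset_uIcc_left hs_mem)
  have hF_right := hF_int.mono_set (uIcc_subset_uIcc_right hs_mem)
  have h2I : ∫ τ in (s - Δ)..(s + Δ), F τ = 2 * ∫ τ in (s - Δ)..(s + Δ), g τ * w τ := by
    simp only [F, add_mul]
    rw [integral_add hint hint_reflect, ← integral_mul_eq_integral_comp_reflect_mul hw]
    ring
  rw [← integral_add_adjacent_intervals hF_left hF_right] at h2I
  linarith [hF_neg (by linarith) (fun h => lt_irrefl s h.2) hF_left,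
    hF_neg (by linarith) (fun h => lt_irrefl s h.1) hF_right]

lemma integral_mul_pos_of_odd_of_strictMono (hg : StrictMono g) (hodd : Function.Odd g)
    (hw : ∀ τ, w (2 * s - τ) = w τ) (hw_pos : ∀ τ ≠ s, 0 < w τ)
    (hint : IntervalIntegrable (fun τ => g τ * w τ) volume (s - Δ) (s + Δ))
    (hs : 0 < s) (hΔ : 0 < Δ) :
    0 < ∫ τ in (s - Δ)..(s + Δ), g τ * w τ := by
  have hends : -(s + Δ) = -s - Δ ∧ -(s - Δ) = -s + Δ := ⟨by ring, by ring⟩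
  have hint_neg : IntervalIntegrable (fun τ => g τ * w (-τ)) volume (-s - Δ) (-s + Δ) := by
    have h := ((IntervalIntegrable.iff_comp_neg (f := fun τ => -(g τ * w τ))).mp hint.neg).symm
    rw [hends.1, hends.2] at h
    simpa only [hodd _, neg_mul, neg_neg] using h
  have hreflect :
      ∫ τ in (-s - Δ)..(-s + Δ), g τ * w (-τ) = -∫ τ in (s - Δ)..(s + Δ), g τ * w τ := by
    rw [← hends.1, ← hends.2, ← integral_comp_neg (fun τ => g τ * w (-τ)),
      ← intervalIntegral.integral_neg]
    simp only [hodd _, neg_mul, neg_neg]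
  have hneg := integral_mul_neg_of_odd_of_strictMono hg hodd (s := -s) (w := fun τ => w (-τ))
    (fun τ => by rw [← hw (-τ)]; ring_nf) (fun τ hτ => hw_pos (-τ) (by contrapose! hτ; linarith))
    hint_neg (by linarith) hΔ
  linarith

end ReflectedWeight

lemma strictMono_div_sqrt_sq_add {r : ℝ} (hr : 0 < r) :
    StrictMono fun τ : ℝ => τ / √(τ ^ 2 + r) := by
  intro x y hxy
  have ha2 : √(x ^ 2 + r) ^ 2 = x ^ 2 + r := Real.sq_sqrt (by positivity)
  have hb2 : √(y ^ 2 + r) ^ 2 = y ^ 2 + r := Real.sq_sqrt (by positivity)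
  set a := √(x ^ 2 + r)
  set b := √(y ^ 2 + r)
  have ha : 0 < a := by positivity
  have hb : 0 < b := by positivity
  have habs_lt : |x * y| < a * b := by
    refine abs_lt_of_sq_lt_sq ?_ (by positivity)
    rw [mul_pow a, ha2, hb2]
    nlinarith [mul_pos hr hr, sq_nonneg x, sq_nonneg y]
  -- an identity in `a, b, x, y` modulo `a ^ 2 - x ^ 2 = b ^ 2 - y ^ 2 = r`
  have key : (y * a - x * b) * (a * b + x * y + r) = r * ((y - x) * (a + b)) := by
    linear_combination (y * b) * ha2 - (x * a) * hb2
  have hpos : 0 < y * a - x * b := by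
    have hrhs : 0 < r * ((y - x) * (a + b)) := by have := sub_pos.2 hxy; positivity
    exact pos_of_mul_pos_left (key ▸ hrhs) (by linarith [neg_abs_le (x * y)])
  show x / a < y / b
  rw [div_lt_div_iff₀ ha hb]
  linarith

lemma odd_div_sqrt_sq_add (r : ℝ) : Function.Odd fun τ : ℝ => τ / √(τ ^ 2 + r) := by
  intro τ
  simp only [neg_sq, neg_div]

lemma continuous_div_sqrt_sq_add {r : ℝ} (hr : 0 < r) :
    Continuous fun τ : ℝ => τ / √(τ ^ 2 + r) :=
  continuous_id.div (by fun_prop) fun τ => (Real.sqrt_pos.2 (by positivity)).ne'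

lemma locallyIntegrable_abs_rpow_neg {α : ℝ} (hα : α < 1) :
    LocallyIntegrable fun x : ℝ => |x| ^ (-α) := by
  refine locallyIntegrable_of_norm_le_rpow (C := 1) (α := α) (by simp) (by simpa using hα)
    (Filter.Eventually.of_forall fun x => ?_)
    (continuous_abs.measurable.pow_const _).aestronglyMeasurable
  simp [Real.abs_rpow_of_nonneg]

lemma intervalIntegrable_abs_sub_rpow_neg {α : ℝ} (hα : α < 1) (s a b : ℝ) :
    IntervalIntegrable (fun τ : ℝ => |s - τ| ^ (-α)) volume a b := by
  have h : IntervalIntegrable (fun x : ℝ => |x| ^ (-α)) volume (s - a) (s - b) :=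
    ((locallyIntegrable_abs_rpow_neg hα).integrableOn_isCompact isCompact_uIcc).intervalIntegrable
  simpa using h.comp_sub_left s

theorem integral_sign_of_shifted_kernel_general (r s Δ α : ℝ) (hr : 0 < r) (hΔ : 0 < Δ)
    (hα1 : α < 1) :
    (s < 0 → (∫ τ in (s - Δ)..(s + Δ), (τ / Real.sqrt (τ ^ 2 + r)) * |s - τ| ^ (-α)) < 0) ∧
    (0 < s → 0 < ∫ τ in (s - Δ)..(s + Δ), (τ / Real.sqrt (τ ^ 2 + r)) * |s - τ| ^ (-α)) := by
  have hw (τ : ℝ) : |s - (2 * s - τ)| ^ (-α) = |s - τ| ^ (-α) := by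
    rw [show s - (2 * s - τ) = -(s - τ) by ring, abs_neg]
  have hw_pos (τ : ℝ) (hτ : τ ≠ s) : 0 < |s - τ| ^ (-α) :=
    Real.rpow_pos_of_pos (abs_pos.2 (sub_ne_zero.2 hτ.symm)) _
  have hint := (intervalIntegrable_abs_sub_rpow_neg hα1 s (s - Δ) (s + Δ)).continuousOn_mul
    (continuous_div_sqrt_sq_add hr).continuousOn
  exact ⟨fun hs => integral_mul_neg_of_odd_of_strictMono (strictMono_div_sqrt_sq_add hr)
      (odd_div_sqrt_sq_add r) hw hw_pos hint hs hΔ,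
    fun hs => integral_mul_pos_of_odd_of_strictMono (strictMono_div_sqrt_sq_add hr)
      (odd_div_sqrt_sq_add r) hw hw_pos hint hs hΔ⟩

/-- for `g(τ) = τ/√(τ²+r)` with `r > 0`, `Δ > 0`, `s - Δ < 0 < s + Δ` and
`0 < α < 1`, the integral `∫_{s-Δ}^{s+Δ} g(τ) |s-τ|^{-α} dτ` is strictly negative when `s < 0`
and strictly positive when `s > 0`. -/
theorem integral_sign_of_shifted_kernel (r s Δ α : ℝ) (hr : 0 < r) (hΔ : 0 < Δ)
    (h1 : s - Δ < 0) (h2 : 0 < s + Δ) (hα : 0 < α) (hα1 : α < 1) :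
    (s < 0 → (∫ τ in (s - Δ)..(s + Δ), (τ / Real.sqrt (τ ^ 2 + r)) * |s - τ| ^ (-α)) < 0) ∧
    (0 < s → 0 < ∫ τ in (s - Δ)..(s + Δ), (τ / Real.sqrt (τ ^ 2 + r)) * |s - τ| ^ (-α)) :=
  integral_sign_of_shifted_kernel_general r s Δ α hr hΔ hα1
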